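/- Under the hypotheses of the preceding setup (partition x_0 < ... < x_n, constant β > 0, f continuously differentiable, u twice continuously differentiable with βu'' = −f, u(x_0) = u(x_n) = 0, nodal values c_i with c_0 = c_n = 0 solving the Galerkin equations with the hat functions, and u_h^{new} defined element-wise by u_h^{new}(x) = c_k·(x_{k+1}−x)/(x_{k+1}−x_k) + c_{k+1}·(x−x_k)/(x_{k+1}−x_k) − (1/(2β))(x−x_k)(x−x_{k+1})·f(x) on [x_k, x_{k+1}]), one has ( ∫_{x_0}^{x_n} (u(x) − u_h^{new}(x))^2 dx )^{1/2} ≤ √(x_n − x_0) · (h^3/(8β)) · sup_{t∈[x_0,x_n]} |f'(t)|, where h = max_k (x_{k+1} − x_k). -/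

import Mathlib

/-! In one dimension the Galerkin solution is nodally exact. Integrating by parts against a hat
function shows that the exact solution satisfies the Galerkin equations too, so the nodal errors
`c i - u (x i)` have equal consecutive slopes and, vanishing at both ends, vanish identically.
On an element `[a, b]` the corrected solution is then the linear interpolant of `u` minus the
quadratic `(t - a) (b - t) u''(t) / 2`. Freezing `t`, the function
`g s = u s - u''(t) (s - a) (s - b) / 2` has `|g'' s| = |u'' s - u'' t| ≤ K`, where
`K = (b - a) sup |f'| / β` since `β u'' = -f`, so `± g s + K (s - a) (s - b) / 2` is convex.
Convexity bounds the interpolation error of `g` at `t` by `K (t - a) (b - t) / 2 ≤ K (b - a)² / 8`,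
which is the pointwise bound `h³ sup |f'| / (8 β)`; squaring and integrating over the elements
gives the `L²` estimate. -/

noncomputable def hatFun (xm xc xp : ℝ) (t : ℝ) : ℝ :=
  if t ∈ Set.Icc xm xc then (t - xm) / (xc - xm)
  else if t ∈ Set.Icc xc xp then (xp - t) / (xp - xc)
  else 0

open Set MeasureTheory intervalIntegral

theorem forall_hasDerivWithinAt_of_subset {u u' : ℝ → ℝ} {s t : Set ℝ}
    (hu : ∀ x ∈ s, HasDerivWithinAt u (u' x) s x) (hts : t ⊆ s) :
    ∀ x ∈ t, HasDerivWithinAt u (u' x) t x :=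
  fun x hx => (hu x (hts hx)).mono hts

theorem hasDerivAt_sub_mul_sub (a b s : ℝ) :
    HasDerivAt (fun s => (s - a) * (s - b)) ((s - a) + (s - b)) s :=
  (((hasDerivAt_id s).sub_const a).fun_mul ((hasDerivAt_id s).sub_const b)).congr_deriv
    (by simp only [id, one_mul, mul_one]; ring)

theorem hasDerivAt_sub_add_sub (a b s : ℝ) :
    HasDerivAt (fun s => (s - a) + (s - b)) 2 s :=
  (((hasDerivAt_id s).sub_const a).fun_add ((hasDerivAt_id s).sub_const b)).congr_deriv
    one_add_one_eq_two

theorem sub_lineInterp_le_of_neg_le_deriv2 {g g' g'' : ℝ → ℝ} {a b K t : ℝ} (hab : a < b)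
    (hg : ∀ s ∈ Icc a b, HasDerivWithinAt g (g' s) (Icc a b) s)
    (hg' : ∀ s ∈ Icc a b, HasDerivWithinAt g' (g'' s) (Icc a b) s)
    (hK : ∀ s ∈ Icc a b, -K ≤ g'' s) (ht : t ∈ Icc a b) :
    g t - (g a * (b - t) + g b * (t - a)) / (b - a) ≤ K / 2 * ((t - a) * (b - t)) := by
  have hconv : ConvexOn ℝ (Icc a b) fun s => g s + K / 2 * ((s - a) * (s - b)) := by
    have hsub : interior (Icc a b) ⊆ Icc a b := interior_subset
    refine convexOn_of_hasDerivWithinAt2_nonneg (convex_Icc a b)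
      (f' := fun s => g' s + K / 2 * ((s - a) + (s - b))) (f'' := fun s => g'' s + K / 2 * 2)
      (fun s hs => ((hg s hs).continuousWithinAt).add (by fun_prop))
      (fun s hs => (forall_hasDerivWithinAt_of_subset hg hsub s hs).fun_add
        ((hasDerivAt_sub_mul_sub a b s).const_mul _).hasDerivWithinAt)
      (fun s hs => (forall_hasDerivWithinAt_of_subset hg' hsub s hs).fun_add
        ((hasDerivAt_sub_add_sub a b s).const_mul _).hasDerivWithinAt)
      (fun s hs => by linarith [hK s (hsub hs)])
  have hba : 0 < b - a := sub_pos.2 hab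
  have hchord := hconv.2 (left_mem_Icc.2 hab.le) (right_mem_Icc.2 hab.le)
    (div_nonneg (sub_nonneg.2 ht.2) hba.le) (div_nonneg (sub_nonneg.2 ht.1) hba.le)
    (by rw [← add_div, sub_add_sub_cancel, div_self hba.ne'])
  have ht' : (b - t) / (b - a) * a + (t - a) / (b - a) * b = t := by
    field_simp; ring
  simp only [smul_eq_mul, ht', sub_self, zero_mul, mul_zero, add_zero] at hchord
  rw [sub_le_iff_le_add, add_div, mul_div_assoc, mul_div_assoc, mul_comm (g a), mul_comm (g b)]
  linarith

theorem abs_sub_lineInterp_le {g g' g'' : ℝ → ℝ} {a b K t : ℝ} (hab : a < b)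
    (hg : ∀ s ∈ Icc a b, HasDerivWithinAt g (g' s) (Icc a b) s)
    (hg' : ∀ s ∈ Icc a b, HasDerivWithinAt g' (g'' s) (Icc a b) s)
    (hK : ∀ s ∈ Icc a b, |g'' s| ≤ K) (ht : t ∈ Icc a b) :
    |g t - (g a * (b - t) + g b * (t - a)) / (b - a)| ≤ K / 2 * ((t - a) * (b - t)) := by
  have hupper := sub_lineInterp_le_of_neg_le_deriv2 hab hg hg'
    (fun s hs => (abs_le.1 (hK s hs)).1) ht
  have hlower := sub_lineInterp_le_of_neg_le_deriv2 (g := fun s => -g s)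
    (g'' := fun s => -g'' s) hab (fun s hs => (hg s hs).neg) (fun s hs => (hg' s hs).neg)
    (fun s hs => neg_le_neg (abs_le.1 (hK s hs)).2) ht
  refine abs_le.2 ⟨?_, hupper⟩
  linarith [show (-g a * (b - t) + -g b * (t - a)) / (b - a)
    = -((g a * (b - t) + g b * (t - a)) / (b - a)) by ring]

theorem abs_sub_lineInterp_add_deriv2_le {u u' u'' : ℝ → ℝ} {a b L t : ℝ} (hab : a < b)
    (hu : ∀ s ∈ Icc a b, HasDerivWithinAt u (u' s) (Icc a b) s)
    (hu' : ∀ s ∈ Icc a b, HasDerivWithinAt u' (u'' s) (Icc a b) s)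
    (hL : ∀ s ∈ Icc a b, ∀ r ∈ Icc a b, |u'' s - u'' r| ≤ L * |s - r|) (ht : t ∈ Icc a b) :
    |u t - ((u a * (b - t) + u b * (t - a)) / (b - a) - (t - a) * (b - t) / 2 * u'' t)|
      ≤ L * (b - a) ^ 3 / 8 := by
  have hba : 0 < b - a := sub_pos.2 hab
  have hL0 : 0 ≤ L := by
    have := (abs_nonneg _).trans (hL a (left_mem_Icc.2 hab.le) b (right_mem_Icc.2 hab.le))
    rwa [abs_sub_comm, abs_of_pos hba, mul_nonneg_iff_of_pos_right hba] at this
  -- subtracting the quadratic with curvature `u'' t` leaves a second derivative of size `L (b - a)`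
  have hK : ∀ s ∈ Icc a b, |u'' s - u'' t / 2 * 2| ≤ L * (b - a) := fun s hs => by
    rw [div_mul_cancel₀ _ two_ne_zero]
    refine (hL s hs t ht).trans (mul_le_mul_of_nonneg_left ?_ hL0)
    exact abs_sub_le_iff.2 ⟨by linarith [hs.2, ht.1], by linarith [hs.1, ht.2]⟩
  have key := abs_sub_lineInterp_le (g := fun s => u s - u'' t / 2 * ((s - a) * (s - b)))
    (g' := fun s => u' s - u'' t / 2 * ((s - a) + (s - b))) hab
    (fun s hs => (hu s hs).fun_sub ((hasDerivAt_sub_mul_sub a b s).const_mul _).hasDerivWithinAt)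
    (fun s hs => (hu' s hs).fun_sub ((hasDerivAt_sub_add_sub a b s).const_mul _).hasDerivWithinAt)
    hK ht
  have hq : (t - a) * (b - t) ≤ (b - a) ^ 2 / 4 := by nlinarith [sq_nonneg (2 * t - a - b)]
  calc _ = |u t - u'' t / 2 * ((t - a) * (t - b))
          - ((u a - u'' t / 2 * ((a - a) * (a - b))) * (b - t)
            + (u b - u'' t / 2 * ((b - a) * (b - b))) * (t - a)) / (b - a)| := by
        congr 1; field_simp; ring
    _ ≤ L * (b - a) / 2 * ((t - a) * (b - t)) := key
    _ ≤ L * (b - a) / 2 * ((b - a) ^ 2 / 4) := by gcongr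
    _ = L * (b - a) ^ 3 / 8 := by ring

theorem integral_eq_sub_of_hasDerivWithinAt_Icc {F F' : ℝ → ℝ} {a b : ℝ} (hab : a ≤ b)
    (hF : ∀ s ∈ Icc a b, HasDerivWithinAt F (F' s) (Icc a b) s)
    (hF' : ContinuousOn F' (Icc a b)) :
    ∫ s in a..b, F' s = F b - F a :=
  integral_eq_sub_of_hasDerivAt_of_le hab (fun s hs => (hF s hs).continuousWithinAt)
    (fun s hs => (hF s (Ioo_subset_Icc_self hs)).hasDerivAt (Icc_mem_nhds hs.1 hs.2))
    (hF'.intervalIntegrable_of_Icc hab)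

section SecondDerivative

variable {u u' u'' : ℝ → ℝ} {a b : ℝ}

theorem integral_sub_left_mul_deriv2 (hab : a ≤ b)
    (hu : ∀ s ∈ Icc a b, HasDerivWithinAt u (u' s) (Icc a b) s)
    (hu' : ∀ s ∈ Icc a b, HasDerivWithinAt u' (u'' s) (Icc a b) s)
    (hu'' : ContinuousOn u'' (Icc a b)) :
    ∫ s in a..b, (s - a) * u'' s = (b - a) * u' b - (u b - u a) := by
  rw [integral_eq_sub_of_hasDerivWithinAt_Icc (F := fun s => (s - a) * u' s - u s)
    (F' := fun s => (s - a) * u'' s) hab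
    (fun s hs => ((((hasDerivWithinAt_id s _).sub_const a).fun_mul (hu' s hs)).fun_sub
      (hu s hs)).congr_deriv (by simp only [id, one_mul]; ring))
    ((continuousOn_id.sub continuousOn_const).mul hu'')]
  ring

theorem integral_right_sub_mul_deriv2 (hab : a ≤ b)
    (hu : ∀ s ∈ Icc a b, HasDerivWithinAt u (u' s) (Icc a b) s)
    (hu' : ∀ s ∈ Icc a b, HasDerivWithinAt u' (u'' s) (Icc a b) s)
    (hu'' : ContinuousOn u'' (Icc a b)) :
    ∫ s in a..b, (b - s) * u'' s = (u b - u a) - (b - a) * u' a := by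
  rw [integral_eq_sub_of_hasDerivWithinAt_Icc (F := fun s => (b - s) * u' s + u s)
    (F' := fun s => (b - s) * u'' s) hab
    (fun s hs => ((((hasDerivWithinAt_id s _).const_sub b).fun_mul (hu' s hs)).fun_add
      (hu s hs)).congr_deriv (by simp only [id]; ring))
    ((continuousOn_const.sub continuousOn_id).mul hu'')]
  ring

end SecondDerivative

theorem hatFun_of_mem_Icc_left {a c b t : ℝ} (ht : t ∈ Icc a c) :
    hatFun a c b t = (t - a) / (c - a) := if_pos ht

theorem hatFun_of_mem_Icc_right {a c b t : ℝ} (hac : a < c) (hcb : c < b) (ht : t ∈ Icc c b) :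
    hatFun a c b t = (b - t) / (b - c) := by
  by_cases hleft : t ∈ Icc a c
  · obtain rfl : t = c := le_antisymm hleft.2 ht.1
    rw [hatFun_of_mem_Icc_left hleft, div_self (sub_pos.2 hac).ne', div_self (sub_pos.2 hcb).ne']
  · exact (if_neg hleft).trans (if_pos ht)

theorem integral_deriv2_mul_hatFun {u u' u'' : ℝ → ℝ} {a c b : ℝ} (hac : a < c) (hcb : c < b)
    (hu : ∀ s ∈ Icc a b, HasDerivWithinAt u (u' s) (Icc a b) s)
    (hu' : ∀ s ∈ Icc a b, HasDerivWithinAt u' (u'' s) (Icc a b) s)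
    (hu'' : ContinuousOn u'' (Icc a b)) :
    ∫ t in a..b, u'' t * hatFun a c b t = (u b - u c) / (b - c) - (u c - u a) / (c - a) := by
  have hsubL : Icc a c ⊆ Icc a b := Icc_subset_Icc_right hcb.le
  have hsubR : Icc c b ⊆ Icc a b := Icc_subset_Icc_left hac.le
  have hEqL : EqOn (fun t => u'' t * hatFun a c b t) (fun t => (t - a) * u'' t / (c - a))
      (Icc a c) := fun t ht => by
    simp only [hatFun_of_mem_Icc_left ht]; ring
  have hEqR : EqOn (fun t => u'' t * hatFun a c b t) (fun t => (b - t) * u'' t / (b - c))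
      (Icc c b) := fun t ht => by
    simp only [hatFun_of_mem_Icc_right hac hcb ht]; ring
  have hcontL : ContinuousOn (fun t => (t - a) * u'' t / (c - a)) (Icc a c) :=
    ((continuousOn_id.sub continuousOn_const).mul (hu''.mono hsubL)).div_const _
  have hcontR : ContinuousOn (fun t => (b - t) * u'' t / (b - c)) (Icc c b) :=
    ((continuousOn_const.sub continuousOn_id).mul (hu''.mono hsubR)).div_const _
  have hintL : ∫ t in a..c, u'' t * hatFun a c b t = ((c - a) * u' c - (u c - u a)) / (c - a) := by
    rw [integral_congr (hEqL.mono (uIcc_of_le hac.le).le), intervalIntegral.integral_div,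
      integral_sub_left_mul_deriv2 hac.le (forall_hasDerivWithinAt_of_subset hu hsubL)
        (forall_hasDerivWithinAt_of_subset hu' hsubL) (hu''.mono hsubL)]
  have hintR : ∫ t in c..b, u'' t * hatFun a c b t = ((u b - u c) - (b - c) * u' c) / (b - c) := by
    rw [integral_congr (hEqR.mono (uIcc_of_le hcb.le).le), intervalIntegral.integral_div,
      integral_right_sub_mul_deriv2 hcb.le (forall_hasDerivWithinAt_of_subset hu hsubR)
        (forall_hasDerivWithinAt_of_subset hu' hsubR) (hu''.mono hsubR)]
  rw [← integral_add_adjacent_intervals ((hcontL.congr hEqL).intervalIntegrable_of_Icc hac.le)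
      ((hcontR.congr hEqR).intervalIntegrable_of_Icc hcb.le), hintL, hintR]
  field_simp [(sub_pos.2 hac).ne', (sub_pos.2 hcb).ne']
  ring

theorem galerkin_eq_of_ode {u u' u'' f : ℝ → ℝ} {a c b β : ℝ} (hac : a < c) (hcb : c < b)
    (hu : ∀ s ∈ Icc a b, HasDerivWithinAt u (u' s) (Icc a b) s)
    (hu' : ∀ s ∈ Icc a b, HasDerivWithinAt u' (u'' s) (Icc a b) s)
    (hu'' : ContinuousOn u'' (Icc a b)) (hode : ∀ s ∈ Icc a b, β * u'' s = -f s) :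
    β * ((u c - u a) / (c - a) - (u b - u c) / (b - c))
      = ∫ t in a..b, f t * hatFun a c b t := by
  have hf : EqOn (fun t => f t * hatFun a c b t) (fun t => -β * (u'' t * hatFun a c b t))
      (uIcc a b) := fun t ht => by
    rw [uIcc_of_le (hac.trans hcb).le] at ht
    linear_combination hatFun a c b t * hode t ht
  rw [integral_congr hf, intervalIntegral.integral_const_mul,
    integral_deriv2_mul_hatFun hac hcb hu hu' hu'']
  ring

theorem eq_zero_of_slope_eq {n : ℕ} {x e : ℕ → ℝ} (hx : ∀ i < n, x i < x (i + 1))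
    (he0 : e 0 = 0) (hen : e n = 0)
    (hslope : ∀ i, i + 2 ≤ n → (e (i + 1) - e i) / (x (i + 1) - x i)
      = (e (i + 2) - e (i + 1)) / (x (i + 2) - x (i + 1))) :
    ∀ i ≤ n, e i = 0 := by
  set S := (e 1 - e 0) / (x 1 - x 0)
  have hconst : ∀ i, i + 1 ≤ n → (e (i + 1) - e i) / (x (i + 1) - x i) = S := by
    intro i hi
    induction i with
    | zero => rfl
    | succ i ih => exact (hslope i (by omega)).symm.trans (ih (by omega))
  have hlin : ∀ i ≤ n, e i = S * (x i - x 0) := by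
    intro i hi
    induction i with
    | zero => simp [he0]
    | succ i ih =>
      have hstep := hconst i hi
      rw [div_eq_iff (sub_pos.2 (hx i (by omega))).ne'] at hstep
      linear_combination hstep + ih (by omega)
  rcases Nat.eq_zero_or_pos n with rfl | hn
  · intro i hi
    rwa [Nat.le_zero.1 hi]
  have hx0n : x 0 < x n :=
    (strictMonoOn_Iic_of_lt_succ fun m hm => by simpa using hx m hm) (by simp) (by simp) hn
  have hS : S = 0 := by
    have := hlin n le_rfl
    rw [hen, eq_comm, mul_eq_zero] at this
    exact this.resolve_right (sub_pos.2 hx0n).ne'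
  intro i hi
  rw [hlin i hi, hS, zero_mul]

theorem Icc_subset_Icc_of_lt_succ {n : ℕ} {x : ℕ → ℝ} (hx : ∀ i < n, x i < x (i + 1))
    {i j : ℕ} (hij : i ≤ j) (hjn : j ≤ n) : Icc (x i) (x j) ⊆ Icc (x 0) (x n) :=
  have hmono : MonotoneOn x (Iic n) :=
    (strictMonoOn_Iic_of_lt_succ fun m hm => by simpa using hx m hm).monotoneOn
  Icc_subset_Icc (hmono (by simp) (by simp; omega) (by omega))
    (hmono (by simp; omega) (by simp) hjn)

theorem galerkin_coeff_eq_nodal_value {n : ℕ} {x : ℕ → ℝ} (hx : ∀ i < n, x i < x (i + 1))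
    {β : ℝ} (hβ : 0 < β) {f u u' u'' : ℝ → ℝ}
    (hu' : ∀ t ∈ Icc (x 0) (x n), HasDerivWithinAt u (u' t) (Icc (x 0) (x n)) t)
    (hu'' : ∀ t ∈ Icc (x 0) (x n), HasDerivWithinAt u' (u'' t) (Icc (x 0) (x n)) t)
    (hu''c : ContinuousOn u'' (Icc (x 0) (x n)))
    (hode : ∀ t ∈ Icc (x 0) (x n), β * u'' t = -f t)
    (hu0 : u (x 0) = 0) (hun : u (x n) = 0) {c : ℕ → ℝ} (hc0 : c 0 = 0) (hcn : c n = 0)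
    (hgal : ∀ i, 1 ≤ i → i ≤ n - 1 →
      β * ((c i - c (i - 1)) / (x i - x (i - 1)) - (c (i + 1) - c i) / (x (i + 1) - x i))
        = ∫ t in (x (i - 1))..(x (i + 1)), f t * hatFun (x (i - 1)) (x i) (x (i + 1)) t) :
    ∀ i ≤ n, c i = u (x i) := by
  have hslope : ∀ j, j + 2 ≤ n →
      (c (j + 1) - u (x (j + 1)) - (c j - u (x j))) / (x (j + 1) - x j)
        = (c (j + 2) - u (x (j + 2)) - (c (j + 1) - u (x (j + 1)))) / (x (j + 2) - x (j + 1)) := by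
    intro j hj
    have hsub := Icc_subset_Icc_of_lt_succ hx (Nat.le_add_right j 2) hj
    have hexact := galerkin_eq_of_ode (hx j (by omega)) (hx (j + 1) (by omega))
      (forall_hasDerivWithinAt_of_subset hu' hsub) (forall_hasDerivWithinAt_of_subset hu'' hsub)
      (hu''c.mono hsub) (fun s hs => hode s (hsub hs))
    have hdiff := mul_left_cancel₀ hβ.ne' ((hgal (j + 1) (by omega) (by omega)).trans hexact.symm)
    simp only [sub_div, Nat.add_sub_cancel] at hdiff ⊢
    linarith
  intro i hi
  exact sub_eq_zero.1 (eq_zero_of_slope_eq (e := fun i => c i - u (x i)) hx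
    (by simp [hc0, hu0]) (by simp [hcn, hun]) hslope i hi)

theorem abs_sub_le_iSup_abs_deriv_mul {f f' : ℝ → ℝ} {a b s r : ℝ}
    (hf : ∀ t ∈ Icc a b, HasDerivWithinAt f (f' t) (Icc a b) t) (hf' : ContinuousOn f' (Icc a b))
    (hs : s ∈ Icc a b) (hr : r ∈ Icc a b) :
    |f s - f r| ≤ (⨆ t : Icc a b, |f' t|) * |s - r| := by
  have hbdd : BddAbove (range fun t : Icc a b => |f' t|) := by
    rw [← image_eq_range (fun t => |f' t|)]
    exact (isCompact_Icc.image_of_continuousOn hf'.abs).bddAbove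
  simpa only [Real.norm_eq_abs] using Convex.norm_image_sub_le_of_norm_hasDerivWithin_le hf
    (fun t ht => le_ciSup hbdd (⟨t, ht⟩ : Icc a b)) (convex_Icc a b) hr hs

theorem abs_sub_correctedInterp_le_of_ode {u u' u'' f : ℝ → ℝ} {a b β M t : ℝ} (hab : a < b)
    (hβ : 0 < β) (hu : ∀ s ∈ Icc a b, HasDerivWithinAt u (u' s) (Icc a b) s)
    (hu' : ∀ s ∈ Icc a b, HasDerivWithinAt u' (u'' s) (Icc a b) s)
    (hode : ∀ s ∈ Icc a b, β * u'' s = -f s)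
    (hf : ∀ s ∈ Icc a b, ∀ r ∈ Icc a b, |f s - f r| ≤ M * |s - r|) (ht : t ∈ Icc a b) :
    |u t - (u a * (b - t) / (b - a) + u b * (t - a) / (b - a)
        - 1 / (2 * β) * (t - a) * (t - b) * f t)| ≤ (b - a) ^ 3 / (8 * β) * M := by
  have hL : ∀ s ∈ Icc a b, ∀ r ∈ Icc a b, |u'' s - u'' r| ≤ M / β * |s - r| := by
    intro s hs r hr
    have hdiff : u'' s - u'' r = (f r - f s) / β := by
      field_simp
      linear_combination hode s hs - hode r hr
    rw [hdiff, abs_div, abs_of_pos hβ, div_le_iff₀ hβ, abs_sub_comm s r]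
    calc |f r - f s| ≤ M * |r - s| := hf r hr s hs
      _ = M / β * |r - s| * β := by field_simp
  have hft : f t = -(β * u'' t) := by rw [hode t ht, neg_neg]
  convert abs_sub_lineInterp_add_deriv2_le hab hu hu' hL ht using 2
  · rw [hft]
    field_simp
    ring
  · ring

theorem integral_le_mul_of_le_on_partition {g : ℝ → ℝ} {x : ℕ → ℝ} {n : ℕ} {B : ℝ}
    (hx : ∀ k < n, x k ≤ x (k + 1))
    (hg : ∀ k < n, IntervalIntegrable g volume (x k) (x (k + 1)))
    (hgB : ∀ k < n, ∀ t ∈ Icc (x k) (x (k + 1)), g t ≤ B) :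
    ∫ t in x 0..x n, g t ≤ (x n - x 0) * B := by
  rw [← sum_integral_adjacent_intervals hg, ← Finset.sum_range_sub, Finset.sum_mul]
  refine Finset.sum_le_sum fun k hk => ?_
  have hk := Finset.mem_range.1 hk
  calc ∫ t in x k..x (k + 1), g t ≤ ∫ _ in x k..x (k + 1), B :=
        integral_mono_on (hx k hk) (hg k hk) intervalIntegrable_const (hgB k hk)
    _ = (x (k + 1) - x k) * B := by rw [intervalIntegral.integral_const, smul_eq_mul]

theorem sqrt_integral_sq_le_of_abs_le_on_partition {g : ℝ → ℝ} {x : ℕ → ℝ} {n : ℕ} {B : ℝ}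
    (hx : ∀ k < n, x k ≤ x (k + 1)) (hB : 0 ≤ B)
    (hg : ∀ k < n, ContinuousOn g (Icc (x k) (x (k + 1))))
    (hgB : ∀ k < n, ∀ t ∈ Icc (x k) (x (k + 1)), |g t| ≤ B) :
    √(∫ t in x 0..x n, g t ^ 2) ≤ √(x n - x 0) * B := by
  have hsq := integral_le_mul_of_le_on_partition (g := fun t => g t ^ 2) hx
    (fun k hk => ((hg k hk).pow 2).intervalIntegrable_of_Icc (hx k hk))
    (fun k hk t ht => sq_le_sq' (abs_le.1 (hgB k hk t ht)).1 (abs_le.1 (hgB k hk t ht)).2)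
  calc √(∫ t in x 0..x n, g t ^ 2) ≤ √((x n - x 0) * B ^ 2) := Real.sqrt_le_sqrt hsq
    _ = √(x n - x 0) * B := by rw [Real.sqrt_mul' _ (sq_nonneg B), Real.sqrt_sq hB]

/-- The posterior-corrected `P₁` finite element solution `u_h^{new}`
satisfies the third-order `L²` bound
`‖u − u_h^{new}‖_{L²} ≤ √(x_n − x_0) · (h³/(8β)) · sup |f'|`, where `h` is the mesh size. -/
theorem posterior_corrected_fem_third_order_L2
    (n : ℕ) (hn : 1 ≤ n) (x : ℕ → ℝ) (hx : ∀ i < n, x i < x (i + 1))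
    (β : ℝ) (hβ : 0 < β) (f f' u u' u'' : ℝ → ℝ)
    (hf' : ∀ t ∈ Set.Icc (x 0) (x n), HasDerivWithinAt f (f' t) (Set.Icc (x 0) (x n)) t)
    (hf'c : ContinuousOn f' (Set.Icc (x 0) (x n)))
    (hu' : ∀ t ∈ Set.Icc (x 0) (x n), HasDerivWithinAt u (u' t) (Set.Icc (x 0) (x n)) t)
    (hu'' : ∀ t ∈ Set.Icc (x 0) (x n), HasDerivWithinAt u' (u'' t) (Set.Icc (x 0) (x n)) t)
    (hu''c : ContinuousOn u'' (Set.Icc (x 0) (x n)))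
    (hode : ∀ t ∈ Set.Icc (x 0) (x n), β * u'' t = -f t)
    (hu0 : u (x 0) = 0) (hun : u (x n) = 0)
    (c : ℕ → ℝ) (hc0 : c 0 = 0) (hcn : c n = 0)
    (hgal : ∀ i, 1 ≤ i → i ≤ n - 1 →
      β * ((c i - c (i - 1)) / (x i - x (i - 1)) - (c (i + 1) - c i) / (x (i + 1) - x i))
        = ∫ t in (x (i - 1))..(x (i + 1)), f t * hatFun (x (i - 1)) (x i) (x (i + 1)) t)
    (uhnew : ℝ → ℝ)
    (huh : ∀ k < n, ∀ t ∈ Set.Icc (x k) (x (k + 1)),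
      uhnew t = c k * (x (k + 1) - t) / (x (k + 1) - x k)
        + c (k + 1) * (t - x k) / (x (k + 1) - x k)
        - 1 / (2 * β) * (t - x k) * (t - x (k + 1)) * f t)
    (H : ℝ)
    (hH : H = (Finset.range n).sup' (Finset.nonempty_range_iff.mpr (by omega))
      (fun k => x (k + 1) - x k)) :
    Real.sqrt (∫ t in (x 0)..(x n), (u t - uhnew t) ^ 2)
      ≤ Real.sqrt (x n - x 0) * (H ^ 3 / (8 * β))
        * ⨆ s : Set.Icc (x 0) (x n), |f' s| := by
  have hsub : ∀ k < n, Icc (x k) (x (k + 1)) ⊆ Icc (x 0) (x n) := fun k hk =>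
    Icc_subset_Icc_of_lt_succ hx (Nat.le_succ k) hk
  have hmesh : ∀ k < n, x (k + 1) - x k ≤ H := fun k hk =>
    hH ▸ Finset.le_sup' (fun k => x (k + 1) - x k) (Finset.mem_range.2 hk)
  have hnode := galerkin_coeff_eq_nodal_value hx hβ hu' hu'' hu''c hode hu0 hun hc0 hcn hgal
  have hM0 := Real.iSup_nonneg fun s : Icc (x 0) (x n) => abs_nonneg (f' s)
  have hfc : ContinuousOn f (Icc (x 0) (x n)) := fun t ht => (hf' t ht).continuousWithinAt
  refine (sqrt_integral_sq_le_of_abs_le_on_partition (fun k hk => (hx k hk).le) ?_ ?_ ?_).trans_eq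
    (mul_assoc _ _ _).symm
  · have := (sub_pos.2 (hx 0 hn)).le.trans (hmesh 0 hn)
    positivity
  · intro k hk
    have hfk := hfc.mono (hsub k hk)
    have huk : ContinuousOn u (Icc (x k) (x (k + 1))) := fun t ht =>
      (hu' t (hsub k hk ht)).continuousWithinAt.mono (hsub k hk)
    exact huk.sub (ContinuousOn.congr (by fun_prop) (huh k hk))
  · intro k hk t ht
    rw [huh k hk t ht, hnode k (by omega), hnode (k + 1) hk]
    refine (abs_sub_correctedInterp_le_of_ode (hx k hk) hβ
      (forall_hasDerivWithinAt_of_subset hu' (hsub k hk))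
      (forall_hasDerivWithinAt_of_subset hu'' (hsub k hk)) (fun s hs => hode s (hsub k hk hs))
      (fun s hs r hr => abs_sub_le_iSup_abs_deriv_mul hf' hf'c (hsub k hk hs) (hsub k hk hr))
      ht).trans ?_
    have := (sub_pos.2 (hx k hk)).le
    gcongr
    exact hmesh k hk
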